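/- arXiv:1505.04093 — 2 statements merged into one kernel-verified Lean document; each statement's English description precedes it below -/
import Mathlib

section
/- For each i ∈ {1,…,2m}, j ∈ {1,…,n} and every (u,v) ∈ g_↓ ∩ TR_ij, the set S = {(u',v') ∈ g_↓ ∩ LB_ij : u' ≤ u and v' ≤ v} is nonempty and has a ≼-greatest element (u*,v*), and r_↓(u,v) = r_↓(u*,v*). -/
open Set

noncomputable section

/-- The piecewise linear closed curve through the vertices `x 0, x 1, …`:
`f(i+α) = (1-α) • x i + α • x (i+1)`. -/
def fCurve {k : ℕ} (x : ℕ → EuclideanSpace ℝ (Fin k)) (t : ℝ) :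
    EuclideanSpace ℝ (Fin k) :=
  (1 - Int.fract t) • x (⌊t⌋.toNat) + Int.fract t • x (⌊t⌋.toNat + 1)

/-- The extension of the curve from `[0,m]` to `[0,2m]` by `f(u) = f(u-m)` for `u > m`. -/
def fCurveExt {k : ℕ} (m : ℕ) (x : ℕ → EuclideanSpace ℝ (Fin k)) (u : ℝ) :
    EuclideanSpace ℝ (Fin k) :=
  if u ≤ m then fCurve x u else fCurve x (u - m)

/-- The rectangle `D = [0,2m] × [0,n]`. -/
def Dfull (m n : ℕ) : Set (ℝ × ℝ) :=
  Icc (0:ℝ) (2*(m:ℝ)) ×ˢ Icc (0:ℝ) (n:ℝ)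

/-- The free space `D_ε = {(u,v) ∈ D : dist (f_X u) (f_Y v) ≤ ε}`. -/
def Dfree {k : ℕ} (m n : ℕ) (x y : ℕ → EuclideanSpace ℝ (Fin k)) (ε : ℝ) :
    Set (ℝ × ℝ) :=
  {p ∈ Dfull m n | dist (fCurveExt m x p.1) (fCurve y p.2) ≤ ε}

/-- The top side `T = [0,2m] × {n}` of `D`. -/
def Tside (m n : ℕ) : Set (ℝ × ℝ) := Icc (0:ℝ) (2*(m:ℝ)) ×ˢ {(n:ℝ)}

/-- The bottom side `B = [0,2m] × {0}` of `D`. -/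
def Bside (m : ℕ) : Set (ℝ × ℝ) := Icc (0:ℝ) (2*(m:ℝ)) ×ˢ {(0:ℝ)}

/-- A monotone (non-decreasing) path: a connected subset `γ ⊆ Dε` with
`(u-u')·(v-v') ≥ 0` for all `(u,v), (u',v') ∈ γ`. -/
def IsMonPath (Dε γ : Set (ℝ × ℝ)) : Prop :=
  γ ⊆ Dε ∧ IsConnected γ ∧
    ∀ p ∈ γ, ∀ q ∈ γ, (p.1 - q.1) * (p.2 - q.2) ≥ 0

/-- Two points are mutually reachable if some monotone path contains both. -/
def Reach (Dε : Set (ℝ × ℝ)) (p q : ℝ × ℝ) : Prop :=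
  ∃ γ : Set (ℝ × ℝ), IsMonPath Dε γ ∧ p ∈ γ ∧ q ∈ γ

/-- `g↓`: the points of `Dε` mutually reachable with at least one point of `B`. -/
def gDown (m : ℕ) (Dε : Set (ℝ × ℝ)) : Set (ℝ × ℝ) :=
  {p ∈ Dε | ∃ q ∈ Bside m, Reach Dε p q}

/-- `g↑`: the points of `Dε` mutually reachable with at least one point of `T`. -/
def gUp (m n : ℕ) (Dε : Set (ℝ × ℝ)) : Set (ℝ × ℝ) :=
  {p ∈ Dε | ∃ q ∈ Tside m n, Reach Dε p q}

/-- The pointer `r↑(p)`: the maximum `u* ∈ [0,2m]` such that `p` and `(u*, n)`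
are mutually reachable. -/
def rUp (m n : ℕ) (Dε : Set (ℝ × ℝ)) (p : ℝ × ℝ) : ℝ :=
  sSup {u : ℝ | u ∈ Icc (0:ℝ) (2*(m:ℝ)) ∧ Reach Dε p (u, (n:ℝ))}

/-- The pointer `r↓(p)`: for `p` with `p.2 > 0`, the maximum `u* ∈ [0,2m]` such
that `p` and `(u*, 0)` are mutually reachable; on the bottom side `r↓(u,0) = u`. -/
def rDown (m : ℕ) (Dε : Set (ℝ × ℝ)) (p : ℝ × ℝ) : ℝ :=
  if p.2 = 0 then p.1
  else sSup {u : ℝ | u ∈ Icc (0:ℝ) (2*(m:ℝ)) ∧ Reach Dε p (u, (0:ℝ))}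

/-- The cell `D_ij = [i-1,i] × [j-1,j]`. -/
def cellD (i j : ℕ) : Set (ℝ × ℝ) :=
  Icc ((i:ℝ)-1) (i:ℝ) ×ˢ Icc ((j:ℝ)-1) (j:ℝ)

/-- The top side `T_ij` of the cell `D_ij`. -/
def cellT (i j : ℕ) : Set (ℝ × ℝ) := Icc ((i:ℝ)-1) (i:ℝ) ×ˢ {(j:ℝ)}

/-- The bottom side `B_ij` of the cell `D_ij`. -/
def cellB (i j : ℕ) : Set (ℝ × ℝ) := Icc ((i:ℝ)-1) (i:ℝ) ×ˢ {((j:ℝ)-1)}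

/-- The right side `R_ij` of the cell `D_ij`. -/
def cellR (i j : ℕ) : Set (ℝ × ℝ) := {(i:ℝ)} ×ˢ Icc ((j:ℝ)-1) (j:ℝ)

/-- The left side `L_ij` of the cell `D_ij`. -/
def cellL (i j : ℕ) : Set (ℝ × ℝ) := {((i:ℝ)-1)} ×ˢ Icc ((j:ℝ)-1) (j:ℝ)

/-- The partial order `≼` on `D`: `(u1,v1) ≼ (u2,v2)` iff `u1 ≤ u2` and `v1 ≥ v2`. -/
def prec (p q : ℝ × ℝ) : Prop := p.1 ≤ q.1 ∧ q.2 ≤ p.2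

/-!
A monotone path, parametrized by the level `ξ = u + v`, is the graph `ξ ↦ (h ξ, ξ - h ξ)` of a
"staircase" `h`: both `h` and `ξ - h ξ` are nondecreasing, so `h` is 1-Lipschitz. Staircases can be
glued, and a pointwise `limsup` of staircases is a staircase; hence `g↓` is closed and the set `S`
is compact. On `L_ij ∪ B_ij` the order `≼` is the linear order of `u - v`, so `S` has a greatest
element `q`. The free space of a cell is convex, so `p` descends to `q` along a segment.
Conversely, every descent from `p` to the bottom side leaves the cell through some `c ≼ q`, and a
descent from `c` ending to the right of a descent from `q` must cross it; so `q` reaches the same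
bottom points as `p`, up to ones further left, and the pointers agree.
-/

open Filter Topology

section Curve

variable {k : ℕ} (x : ℕ → EuclideanSpace ℝ (Fin k))

lemma fCurve_natCast (N : ℕ) : fCurve x N = x N := by
  simp [fCurve]

lemma fCurve_eq_lineMap {N : ℕ} {t : ℝ} (ht : t ∈ Icc (N : ℝ) (N + 1)) :
    fCurve x t = AffineMap.lineMap (x N) (x (N + 1)) (t - N) := by
  rcases ht.2.eq_or_lt with rfl | hlt
  · simpa using fCurve_natCast x (N + 1)
  · have hfloor : ⌊t⌋ = N := Int.floor_eq_iff.2 ⟨mod_cast ht.1, mod_cast hlt⟩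
    have hfract : Int.fract t = t - N := by rw [Int.fract, hfloor]; norm_num
    rw [fCurve, hfloor, hfract, AffineMap.lineMap_apply_module, Int.toNat_natCast]

lemma exists_affineMap_eqOn_fCurve (N : ℕ) :
    ∃ g : ℝ →ᵃ[ℝ] EuclideanSpace ℝ (Fin k), EqOn (fCurve x) g (Icc (N : ℝ) (N + 1)) :=
  ⟨(AffineMap.lineMap (x N) (x (N + 1))).comp (AffineMap.id ℝ ℝ - AffineMap.const ℝ ℝ (N : ℝ)),
    fun _ ht => by simp [fCurve_eq_lineMap x ht]⟩

lemma continuousOn_fCurve (N : ℕ) : ContinuousOn (fCurve x) (Icc 0 N) := by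
  induction N with
  | zero => simp
  | succ N ih =>
    obtain ⟨g, hg⟩ := exists_affineMap_eqOn_fCurve x N
    have hstep : ContinuousOn (fCurve x) (Icc (N : ℝ) (N + 1)) :=
      (AffineMap.continuous_of_finiteDimensional g).continuousOn.congr hg
    rw [Nat.cast_succ, ← Icc_union_Icc_eq_Icc (Nat.cast_nonneg N) (by linarith)]
    exact ih.union_of_isClosed hstep isClosed_Icc isClosed_Icc

variable {x} {m : ℕ}

lemma fCurveExt_of_le {u : ℝ} (hu : u ≤ m) : fCurveExt m x u = fCurve x u := if_pos hu

lemma fCurveExt_of_ge (hx : x m = x 0) {u : ℝ} (hu : m ≤ u) :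
    fCurveExt m x u = fCurve x (u - m) := by
  rcases hu.eq_or_lt with rfl | hlt
  · have h0 : fCurve x 0 = x 0 := by simpa using fCurve_natCast x 0
    rw [fCurveExt, if_pos le_rfl, sub_self, fCurve_natCast, hx, h0]
  · exact if_neg hlt.not_ge

lemma continuousOn_fCurveExt (hx : x m = x 0) :
    ContinuousOn (fCurveExt m x) (Icc 0 (2 * m)) := by
  have hleft : ContinuousOn (fCurveExt m x) (Icc 0 m) :=
    (continuousOn_fCurve x m).congr fun _ hu => fCurveExt_of_le hu.2
  have hright : ContinuousOn (fCurveExt m x) (Icc (m : ℝ) (2 * m)) := by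
    refine ((continuousOn_fCurve x m).comp (continuous_sub_right _).continuousOn ?_).congr
      fun _ hu => fCurveExt_of_ge hx hu.1
    exact fun u hu => ⟨by linarith [hu.1], by linarith [hu.2]⟩
  rw [← Icc_union_Icc_eq_Icc (Nat.cast_nonneg m) (by linarith [(Nat.cast_nonneg m : (0 : ℝ) ≤ m)])]
  exact hleft.union_of_isClosed hright isClosed_Icc isClosed_Icc

lemma isClosed_Dfree (hx : x m = x 0) (n : ℕ) (y : ℕ → EuclideanSpace ℝ (Fin k)) (ε : ℝ) :
    IsClosed (Dfree m n x y ε) := by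
  have hcont : ContinuousOn (fun p : ℝ × ℝ => dist (fCurveExt m x p.1) (fCurve y p.2))
      (Dfull m n) :=
    continuous_dist.comp_continuousOn <|
      ((continuousOn_fCurveExt hx).comp continuous_fst.continuousOn fun _ hp => hp.1).prodMk
        ((continuousOn_fCurve y n).comp continuous_snd.continuousOn fun _ hp => hp.2)
  exact hcont.preimage_isClosed_of_isClosed (isClosed_Icc.prod isClosed_Icc) isClosed_Iic

lemma exists_affineMap_eqOn_fCurveExt (hx : x m = x 0) {i : ℕ} (hi : 1 ≤ i) :
    ∃ g : ℝ →ᵃ[ℝ] EuclideanSpace ℝ (Fin k), EqOn (fCurveExt m x) g (Icc ((i : ℝ) - 1) i) := by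
  obtain ⟨N, rfl⟩ : ∃ N, i = N + 1 := ⟨i - 1, by omega⟩
  rw [Nat.cast_succ, add_sub_cancel_right]
  rcases le_or_gt (N + 1) m with hNm | hmN
  · obtain ⟨g, hg⟩ := exists_affineMap_eqOn_fCurve x N
    refine ⟨g, fun u hu => ?_⟩
    rw [fCurveExt_of_le (hu.2.trans (mod_cast hNm)), hg hu]
  · obtain ⟨g, hg⟩ := exists_affineMap_eqOn_fCurve x (N - m)
    refine ⟨g.comp (AffineMap.id ℝ ℝ - AffineMap.const ℝ ℝ (m : ℝ)), fun u hu => ?_⟩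
    have hcast : ((N - m : ℕ) : ℝ) = N - m := Nat.cast_sub (by omega)
    have hmu : (m : ℝ) ≤ u := le_trans (mod_cast (by omega : m ≤ N)) hu.1
    rw [fCurveExt_of_ge hx hmu, hg ⟨by linarith [hu.1], by linarith [hu.2]⟩]
    simp

end Curve

lemma convex_Dfree_inter_cellD {k m n : ℕ} {x y : ℕ → EuclideanSpace ℝ (Fin k)}
    (hx : x m = x 0) (ε : ℝ) {i j : ℕ} (hi : 1 ≤ i) (hj : 1 ≤ j) :
    Convex ℝ (Dfree m n x y ε ∩ cellD i j) := by
  obtain ⟨g₁, hg₁⟩ := exists_affineMap_eqOn_fCurveExt hx hi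
  obtain ⟨N, rfl⟩ : ∃ N, j = N + 1 := ⟨j - 1, by omega⟩
  obtain ⟨g₂, hg₂⟩ := exists_affineMap_eqOn_fCurve y N
  set Φ : ℝ × ℝ →ᵃ[ℝ] EuclideanSpace ℝ (Fin k) := g₁.comp AffineMap.fst - g₂.comp AffineMap.snd
  have hset : Dfree m n x y ε ∩ cellD i (N + 1) =
      (Dfull m n ∩ cellD i (N + 1)) ∩ Φ ⁻¹' Metric.closedBall 0 ε := by
    ext z
    simp only [Dfree, mem_inter_iff, mem_sep_iff, mem_preimage, mem_closedBall_zero_iff]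
    refine ⟨fun ⟨⟨hzD, hzε⟩, hzc⟩ => ⟨⟨hzD, hzc⟩, ?_⟩, fun ⟨⟨hzD, hzc⟩, hzε⟩ => ⟨⟨hzD, ?_⟩, hzc⟩⟩
    all_goals
      have hcell : dist (fCurveExt m x z.1) (fCurve y z.2) = ‖Φ z‖ := by
        rw [dist_eq_norm, hg₁ hzc.1, hg₂ (by simpa using hzc.2)]; simp [Φ]
      linarith
  rw [hset]
  exact (((convex_Icc _ _).prod (convex_Icc _ _)).inter
    ((convex_Icc _ _).prod (convex_Icc _ _))).inter ((convex_closedBall 0 ε).affine_preimage Φ)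

lemma monotone_ite_le {α β : Type*} [LinearOrder α] [Preorder β] {f g : α → β} {c : α}
    (hf : Monotone f) (hg : Monotone g) (hc : f c = g c) :
    Monotone fun ξ => if ξ ≤ c then f ξ else g ξ := by
  intro a b hab
  dsimp only
  split_ifs with ha hb hb
  · exact hf hab
  · exact (hf ha).trans (hc ▸ hg (not_le.1 hb).le)
  · exact absurd (hab.trans hb) ha
  · exact hg hab

lemma nonpos_of_mul_nonneg_of_add_nonpos {a b : ℝ} (hab : 0 ≤ a * b) (h : a + b ≤ 0) : a ≤ 0 := by
  nlinarith

/-- Monotone paths are parametrized by the level `ξ = u + v`: the point of level `ξ` is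
`stair h ξ`. -/
def IsStaircase (h : ℝ → ℝ) : Prop := Monotone h ∧ Monotone fun ξ => ξ - h ξ

def stair (h : ℝ → ℝ) (ξ : ℝ) : ℝ × ℝ := (h ξ, ξ - h ξ)

section Staircase

variable {h h₁ h₂ : ℝ → ℝ}

@[simp] lemma stair_fst (ξ : ℝ) : (stair h ξ).1 = h ξ := rfl

@[simp] lemma stair_snd (ξ : ℝ) : (stair h ξ).2 = ξ - h ξ := rfl

lemma stair_fst_add_snd (ξ : ℝ) : (stair h ξ).1 + (stair h ξ).2 = ξ := by simp

lemma IsStaircase.lipschitzWith (hh : IsStaircase h) : LipschitzWith 1 h :=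
  LipschitzWith.of_le_add fun a b => by
    rcases le_total a b with hab | hab
    · linarith [hh.1 hab, dist_nonneg (x := a) (y := b)]
    · rw [Real.dist_eq, abs_of_nonneg (sub_nonneg.2 hab)]
      linarith [hh.2 hab]

lemma IsStaircase.continuous (hh : IsStaircase h) : Continuous h := hh.lipschitzWith.continuous

lemma IsStaircase.continuous_stair (hh : IsStaircase h) : Continuous (stair h) :=
  hh.continuous.prodMk (continuous_id.sub hh.continuous)

lemma IsStaircase.ite (hh₁ : IsStaircase h₁) (hh₂ : IsStaircase h₂) {c : ℝ} (hc : h₁ c = h₂ c) :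
    IsStaircase fun ξ => if ξ ≤ c then h₁ ξ else h₂ ξ := by
  refine ⟨monotone_ite_le hh₁.1 hh₂.1 hc, fun a b hab => ?_⟩
  have := monotone_ite_le hh₁.2 hh₂.2 (show c - h₁ c = c - h₂ c by rw [hc]) hab
  dsimp only at this ⊢
  split_ifs at this ⊢ <;> assumption

end Staircase

def StairReach (Dε : Set (ℝ × ℝ)) (a b : ℝ × ℝ) : Prop :=
  ∃ (h : ℝ → ℝ) (s t : ℝ), IsStaircase h ∧ s ≤ t ∧ stair h s = b ∧ stair h t = a ∧
    ∀ ξ ∈ Icc s t, stair h ξ ∈ Dε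

namespace StairReach

variable {Dε : Set (ℝ × ℝ)} {a b c : ℝ × ℝ}

lemma le (hab : StairReach Dε a b) : b.1 ≤ a.1 ∧ b.2 ≤ a.2 := by
  obtain ⟨h, s, t, hh, hst, rfl, rfl, -⟩ := hab
  exact ⟨hh.1 hst, hh.2 hst⟩

lemma mem_left (hab : StairReach Dε a b) : a ∈ Dε := by
  obtain ⟨h, s, t, -, hst, -, rfl, hD⟩ := hab
  exact hD t ⟨hst, le_rfl⟩

lemma refl (ha : a ∈ Dε) : StairReach Dε a a :=
  ⟨fun ξ => ξ - a.2, a.1 + a.2, a.1 + a.2,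
    ⟨fun _ _ hab => sub_le_sub_right hab _, by simpa using monotone_const⟩, le_rfl,
    by ext <;> simp [stair], by ext <;> simp [stair], by simpa [stair] using ha⟩

lemma trans (hac : StairReach Dε a c) (hcb : StairReach Dε c b) : StairReach Dε a b := by
  obtain ⟨h₁, s₁, t₁, hh₁, hst₁, hc₁, rfl, hD₁⟩ := hac
  obtain ⟨h₂, s₂, t₂, hh₂, hst₂, rfl, hc₂, hD₂⟩ := hcb
  obtain rfl : t₂ = s₁ := by
    rw [← stair_fst_add_snd (h := h₂) t₂, hc₂, ← hc₁, stair_fst_add_snd]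
  have hjoin : h₂ t₂ = h₁ t₂ := congrArg Prod.fst (hc₂.trans hc₁.symm)
  refine ⟨fun ξ => if ξ ≤ t₂ then h₂ ξ else h₁ ξ, s₂, t₁, hh₂.ite hh₁ hjoin,
    hst₂.trans hst₁, by simp [stair, hst₂], ?_, fun ξ hξ => ?_⟩
  · rcases hst₁.eq_or_lt with rfl | hlt
    · simp [stair, hjoin]
    · simp [stair, hlt.not_ge]
  · by_cases hξt : ξ ≤ t₂
    · simpa [stair, hξt] using hD₂ ξ ⟨hξ.1, hξt⟩
    · simpa [stair, hξt] using hD₁ ξ ⟨(not_le.1 hξt).le, hξ.2⟩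

lemma exists_entry {r₁ r₂ : ℝ} (hab : StairReach Dε a b) (h₁ : r₁ ≤ a.1) (h₂ : r₂ ≤ a.2)
    (hb : b.2 ≤ r₂) :
    ∃ c, StairReach Dε a c ∧ StairReach Dε c b ∧ r₁ ≤ c.1 ∧ r₂ ≤ c.2 ∧ (c.1 = r₁ ∨ c.2 = r₂) := by
  obtain ⟨h, s, t, hh, hst, rfl, rfl, hD⟩ := hab
  have hcont : ContinuousOn (fun ξ => min (h ξ - r₁) (ξ - h ξ - r₂)) (Icc s t) := by
    have := hh.continuous; fun_prop
  obtain ⟨ξ, hξ, hzero⟩ := intermediate_value_Icc hst hcont (show (0 : ℝ) ∈ Icc _ _ from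
    ⟨min_le_of_right_le (by simpa using hb), le_min (by simpa using h₁) (by simpa using h₂)⟩)
  obtain ⟨hr₁, hr₂⟩ := le_min_iff.1 hzero.symm.le
  refine ⟨stair h ξ, ⟨h, ξ, t, hh, hξ.2, rfl, rfl, fun ζ hζ => hD ζ ⟨hξ.1.trans hζ.1, hζ.2⟩⟩,
    ⟨h, s, ξ, hh, hξ.1, rfl, rfl, fun ζ hζ => hD ζ ⟨hζ.1, hζ.2.trans hξ.2⟩⟩,
    by rw [stair_fst]; linarith, by rw [stair_snd]; linarith, ?_⟩
  rcases min_le_iff.1 hzero.le with h0 | h0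
  · exact Or.inl (by rw [stair_fst]; linarith)
  · exact Or.inr (by rw [stair_snd]; linarith)

/-- A descent from `c ≼ q` that ends to the right of a descent from `q` must cross it; switching
paths at the crossing lets `q` descend to `b`. -/
lemma of_crossing {q b' : ℝ × ℝ} (hc : StairReach Dε c b) (hq : StairReach Dε q b')
    (h₁ : c.1 ≤ q.1) (h₂ : q.2 ≤ c.2) (hb₂ : b'.2 = b.2) (hb₁ : b'.1 ≤ b.1) :
    StairReach Dε q b := by
  obtain ⟨f, s, t, hf, hst, rfl, rfl, hDf⟩ := hc
  obtain ⟨g, s', t', hg, hst', rfl, rfl, hDg⟩ := hq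
  simp only [stair_fst, stair_snd] at h₁ h₂ hb₂ hb₁
  have hs's : s' ≤ s := by linarith
  have hst'' : s ≤ t' := by linarith [hf.1 hst, hg.2 hst']
  have hcont : ContinuousOn (fun ξ => f ξ - g ξ) (Icc s (min t t')) :=
    (hf.continuous.sub hg.continuous).continuousOn
  have hstart : 0 ≤ f s - g s := by linarith [hg.2 hs's]
  have hend : f (min t t') - g (min t t') ≤ 0 := by
    rcases le_total t t' with htt | htt
    · rw [min_eq_left htt]; linarith [hg.2 htt]
    · rw [min_eq_right htt]; linarith [hf.1 htt]
  obtain ⟨ξ, hξ, hcross⟩ := intermediate_value_Icc' (le_min hst hst'') hcont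
    (show (0 : ℝ) ∈ Icc _ _ from ⟨hend, hstart⟩)
  have hmeet : stair f ξ = stair g ξ := by simp [stair, sub_eq_zero.1 hcross]
  exact trans (c := stair g ξ)
    ⟨g, ξ, t', hg, hξ.2.trans (min_le_right _ _), rfl, rfl,
      fun ζ hζ => hDg ζ ⟨hs's.trans (hξ.1.trans hζ.1), hζ.2⟩⟩
    ⟨f, s, ξ, hf, hξ.1, rfl, hmeet,
      fun ζ hζ => hDf ζ ⟨hζ.1, hζ.2.trans (hξ.2.trans (min_le_left _ _))⟩⟩

end StairReach

/-- Each `z` contributes the staircase `ξ ↦ min z.1 (ξ - z.2)`, and a supremum of staircases is a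
staircase. -/
def stairOf (K : Set (ℝ × ℝ)) (ξ : ℝ) : ℝ := sSup ((fun z : ℝ × ℝ => min z.1 (ξ - z.2)) '' K)

section stairOf

variable {K : Set (ℝ × ℝ)} {M : ℝ}

lemma min_le_stairOf (hM : ∀ z ∈ K, z.1 ≤ M) {z : ℝ × ℝ} (hz : z ∈ K) (ξ : ℝ) :
    min z.1 (ξ - z.2) ≤ stairOf K ξ :=
  le_csSup ⟨M, by rintro _ ⟨w, hw, rfl⟩; exact (min_le_left _ _).trans (hM w hw)⟩ ⟨z, hz, rfl⟩

lemma isStaircase_stairOf (hK : K.Nonempty) (hM : ∀ z ∈ K, z.1 ≤ M) : IsStaircase (stairOf K) := by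
  refine ⟨fun ξ ξ' hξ => csSup_le (hK.image _) ?_, fun ξ ξ' hξ => ?_⟩
  · rintro _ ⟨z, hz, rfl⟩
    exact (min_le_min le_rfl (by linarith)).trans (min_le_stairOf hM hz ξ')
  · suffices stairOf K ξ' ≤ stairOf K ξ + (ξ' - ξ) by dsimp only; linarith
    refine csSup_le (hK.image _) ?_
    rintro _ ⟨z, hz, rfl⟩
    calc min z.1 (ξ' - z.2) ≤ min (z.1 + (ξ' - ξ)) (ξ - z.2 + (ξ' - ξ)) :=
          min_le_min (by linarith) (by linarith)
      _ = min z.1 (ξ - z.2) + (ξ' - ξ) := min_add_add_right _ _ _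
      _ ≤ stairOf K ξ + (ξ' - ξ) := by gcongr; exact min_le_stairOf hM hz ξ

lemma stair_stairOf (hM : ∀ z ∈ K, z.1 ≤ M)
    (hmon : ∀ p ∈ K, ∀ q ∈ K, (p.1 - q.1) * (p.2 - q.2) ≥ 0) {z : ℝ × ℝ} (hz : z ∈ K) :
    stair (stairOf K) (z.1 + z.2) = z := by
  have hval : stairOf K (z.1 + z.2) = z.1 := by
    refine le_antisymm (csSup_le ⟨_, z, hz, rfl⟩ ?_) ?_
    · rintro _ ⟨w, hw, rfl⟩
      rcases le_or_gt w.1 z.1 with hwz | hwz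
      · exact (min_le_left _ _).trans hwz
      · have : z.2 ≤ w.2 := by nlinarith [hmon w hw z hz]
        exact (min_le_right _ _).trans (by linarith)
    · simpa using min_le_stairOf hM hz (z.1 + z.2)
  ext <;> simp [hval]

end stairOf

lemma IsMonPath.stairReach {Dε γ : Set (ℝ × ℝ)} {a b : ℝ × ℝ} (hγ : IsMonPath Dε γ) (ha : a ∈ γ)
    (hb : b ∈ γ) (h₁ : b.1 ≤ a.1) (h₂ : b.2 ≤ a.2) : StairReach Dε a b := by
  set K := γ ∩ {z | z.1 ≤ a.1}
  have hM : ∀ z ∈ K, z.1 ≤ a.1 := fun z hz => hz.2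
  have hmon : ∀ p ∈ K, ∀ q ∈ K, (p.1 - q.1) * (p.2 - q.2) ≥ 0 :=
    fun p hp q hq => hγ.2.2 p hp.1 q hq.1
  refine ⟨stairOf K, b.1 + b.2, a.1 + a.2, isStaircase_stairOf ⟨a, ha, le_refl a.1⟩ hM,
    by linarith, stair_stairOf hM hmon ⟨hb, h₁⟩, stair_stairOf hM hmon ⟨ha, le_refl a.1⟩,
    fun ξ hξ => ?_⟩
  obtain ⟨z, hz, rfl⟩ := hγ.2.1.isPreconnected.intermediate_value hb ha
    (f := fun z : ℝ × ℝ => z.1 + z.2) (by fun_prop) hξ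
  have hza : z.1 ≤ a.1 := by
    have := nonpos_of_mul_nonneg_of_add_nonpos (hγ.2.2 z hz a ha) (by linarith [hξ.2])
    linarith
  rw [stair_stairOf hM hmon ⟨hz, hza⟩]
  exact hγ.1 hz

lemma StairReach.reach {Dε : Set (ℝ × ℝ)} {a b : ℝ × ℝ} (hab : StairReach Dε a b) :
    Reach Dε a b := by
  obtain ⟨h, s, t, hh, hst, rfl, rfl, hD⟩ := hab
  refine ⟨stair h '' Icc s t, ⟨image_subset_iff.2 hD,
    (isConnected_Icc hst).image _ hh.continuous_stair.continuousOn, ?_⟩,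
    ⟨t, ⟨hst, le_rfl⟩, rfl⟩, ⟨s, ⟨le_rfl, hst⟩, rfl⟩⟩
  rintro _ ⟨ξ, -, rfl⟩ _ ⟨ξ', -, rfl⟩
  rcases le_total ξ ξ' with hξ | hξ
  · exact mul_nonneg_of_nonpos_of_nonpos (by simpa using hh.1 hξ) (by simpa using hh.2 hξ)
  · exact mul_nonneg (by simpa using hh.1 hξ) (by simpa using hh.2 hξ)

lemma reach_iff_stairReach {Dε : Set (ℝ × ℝ)} {a b : ℝ × ℝ} (hab : b.2 < a.2) :
    Reach Dε a b ↔ StairReach Dε a b := by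
  refine ⟨fun ⟨γ, hγ, ha, hb⟩ => hγ.stairReach ha hb ?_ hab.le, StairReach.reach⟩
  have := hγ.2.2 a ha b hb
  nlinarith

lemma Convex.stairReach {Dε F : Set (ℝ × ℝ)} (hF : Convex ℝ F) (hFD : F ⊆ Dε) {a b : ℝ × ℝ}
    (ha : a ∈ F) (hb : b ∈ F) (h₁ : b.1 ≤ a.1) (h₂ : b.2 ≤ a.2) : StairReach Dε a b := by
  refine IsMonPath.stairReach ⟨(hF.segment_subset hb ha).trans hFD,
    ⟨⟨b, left_mem_segment ℝ b a⟩, (convex_segment b a).isPreconnected⟩, ?_⟩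
    (right_mem_segment ℝ b a) (left_mem_segment ℝ b a) h₁ h₂
  rw [segment_eq_image_lineMap]
  rintro _ ⟨θ, -, rfl⟩ _ ⟨θ', -, rfl⟩
  have key : ((AffineMap.lineMap b a θ : ℝ × ℝ).1 - (AffineMap.lineMap b a θ').1) *
      ((AffineMap.lineMap b a θ : ℝ × ℝ).2 - (AffineMap.lineMap b a θ').2) =
      (θ - θ') ^ 2 * ((a.1 - b.1) * (a.2 - b.2)) := by
    simp only [AffineMap.lineMap_apply_module, Prod.fst_add, Prod.snd_add, Prod.smul_fst,
      Prod.smul_snd, smul_eq_mul]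
    ring
  rw [ge_iff_le, key]
  exact mul_nonneg (sq_nonneg _) (mul_nonneg (by linarith) (by linarith))

lemma tendsto_apply_of_isStaircase {ι : Type*} {l : Filter ι} {h : ι → ℝ → ℝ}
    (hh : ∀ n, IsStaircase (h n)) {ξ ξ' : ι → ℝ} {c y : ℝ} (hξ : Tendsto ξ l (𝓝 c))
    (hξ' : Tendsto ξ' l (𝓝 c)) (hy : Tendsto (fun n => h n (ξ n)) l (𝓝 y)) :
    Tendsto (fun n => h n (ξ' n)) l (𝓝 y) := by
  refine hy.congr_dist (squeeze_zero (fun _ => dist_nonneg)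
    (fun n => ((hh n).lipschitzWith.dist_le_mul _ _).trans_eq (one_mul _)) ?_)
  simpa using hξ.dist hξ'

/-- The pointwise `limsup` of the staircases is again a staircase, and each of its points is a
cluster point of points of the approximating staircases. -/
lemma StairReach.of_tendsto {Dε : Set (ℝ × ℝ)} (hD : IsClosed Dε) {a b : ℕ → ℝ × ℝ}
    {a₀ b₀ : ℝ × ℝ} (ha : Tendsto a atTop (𝓝 a₀)) (hb : Tendsto b atTop (𝓝 b₀))
    (hab : ∀ n, StairReach Dε (a n) (b n)) : StairReach Dε a₀ b₀ := by
  choose h s t hh hst hs ht hmem using hab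
  have hs_lim : Tendsto s atTop (𝓝 (b₀.1 + b₀.2)) := by
    simpa [← hs] using hb.fst_nhds.add hb.snd_nhds
  have ht_lim : Tendsto t atTop (𝓝 (a₀.1 + a₀.2)) := by
    simpa [← ht] using ha.fst_nhds.add ha.snd_nhds
  have hbot : Tendsto (fun n => h n (b₀.1 + b₀.2)) atTop (𝓝 b₀.1) :=
    tendsto_apply_of_isStaircase hh hs_lim tendsto_const_nhds (by simpa [← hs] using hb.fst_nhds)
  have htop : Tendsto (fun n => h n (a₀.1 + a₀.2)) atTop (𝓝 a₀.1) :=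
    tendsto_apply_of_isStaircase hh ht_lim tendsto_const_nhds (by simpa [← ht] using ha.fst_nhds)
  have hbdd : ∀ ξ, IsBoundedUnder (· ≤ ·) atTop (fun n => h n ξ) ∧
      IsBoundedUnder (· ≥ ·) atTop (fun n => h n ξ) := by
    intro ξ
    have hclose : ∀ n, |h n ξ - h n (b₀.1 + b₀.2)| ≤ |ξ - (b₀.1 + b₀.2)| := fun n => by
      simpa [Real.dist_eq] using (hh n).lipschitzWith.dist_le_mul ξ (b₀.1 + b₀.2)
    exact ⟨(hbot.add_const _).isBoundedUnder_le.mono_le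
        (Eventually.of_forall fun n => by linarith [(abs_le.1 (hclose n)).2]),
      (hbot.sub_const _).isBoundedUnder_ge.mono_ge
        (Eventually.of_forall fun n => by linarith [(abs_le.1 (hclose n)).1])⟩
  set H : ℝ → ℝ := fun ξ => limsup (fun n => h n ξ) atTop
  have hH : IsStaircase H := by
    refine ⟨fun ξ ξ' hξ => limsup_le_limsup (Eventually.of_forall fun n => (hh n).1 hξ)
      (hbdd ξ).2.isCoboundedUnder_le (hbdd ξ').1, fun ξ ξ' hξ => ?_⟩
    suffices H ξ' ≤ H ξ + (ξ' - ξ) by dsimp only; linarith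
    rw [← limsup_add_const _ _ _ (hbdd ξ).1 (hbdd ξ).2.isCoboundedUnder_le]
    exact limsup_le_limsup (Eventually.of_forall fun n => by linarith [(hh n).2 hξ])
      (hbdd ξ').2.isCoboundedUnder_le (isBoundedUnder_le_add (hbdd ξ).1 isBoundedUnder_const)
  refine ⟨H, b₀.1 + b₀.2, a₀.1 + a₀.2, hH, le_of_tendsto_of_tendsto' hs_lim ht_lim hst,
    by ext <;> simp [H, hbot.limsup_eq], by ext <;> simp [H, htop.limsup_eq], fun ξ hξ => ?_⟩
  obtain ⟨ψ, hψ, hψlim⟩ := (MapClusterPt.limsup (hbdd ξ).2.isCoboundedUnder_le (hbdd ξ).1 :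
    MapClusterPt (H ξ) atTop fun n => h n ξ).tendsto_subseq
  have hclamp : Tendsto (fun n => max (s n) (min ξ (t n))) atTop (𝓝 ξ) := by
    have := hs_lim.max ((tendsto_const_nhds (x := ξ)).min ht_lim)
    rwa [min_eq_left hξ.2, max_eq_right hξ.1] at this
  have hclampψ := hclamp.comp hψ.tendsto_atTop
  have hval := tendsto_apply_of_isStaircase (fun n => hh (ψ n)) tendsto_const_nhds hclampψ hψlim
  exact hD.mem_of_tendsto (hval.prodMk_nhds (hclampψ.sub hval)) (Eventually.of_forall fun n =>
    hmem _ _ ⟨le_max_left _ _, max_le (hst _) (min_le_right _ _)⟩)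

section gDown

variable {m n : ℕ} {Dε : Set (ℝ × ℝ)}

lemma mem_gDown_iff (hDε : Dε ⊆ Dfull m n) {p : ℝ × ℝ} :
    p ∈ gDown m Dε ↔ ∃ u ∈ Icc (0 : ℝ) (2 * m), StairReach Dε p (u, 0) := by
  constructor
  · rintro ⟨hp, ⟨u, v⟩, ⟨hu, hv⟩, hpu⟩
    obtain rfl : v = 0 := hv
    rcases (hDε hp).2.1.eq_or_lt with hp₂ | hp₂
    · refine ⟨p.1, (hDε hp).1, ?_⟩
      rw [show (p.1, (0 : ℝ)) = p from Prod.ext rfl hp₂]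
      exact StairReach.refl hp
    · exact ⟨u, hu, (reach_iff_stairReach hp₂).1 hpu⟩
  · rintro ⟨u, hu, hpu⟩
    exact ⟨hpu.mem_left, (u, 0), ⟨hu, rfl⟩, hpu.reach⟩

lemma rDown_eq_sSup {p : ℝ × ℝ} (hp : 0 < p.2) :
    rDown m Dε p = sSup {u | u ∈ Icc (0 : ℝ) (2 * m) ∧ StairReach Dε p (u, 0)} := by
  simp only [rDown, if_neg hp.ne', reach_iff_stairReach (Dε := Dε) (a := p) (b := (_, 0)) hp]

lemma isClosed_gDown (hD : IsClosed Dε) (hDε : Dε ⊆ Dfull m n) : IsClosed (gDown m Dε) := by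
  refine isSeqClosed_iff_isClosed.1 fun p p₀ hp hlim => ?_
  choose u hu hpu using fun k => (mem_gDown_iff hDε).1 (hp k)
  obtain ⟨u₀, hu₀, φ, hφ, hφlim⟩ := isCompact_Icc.tendsto_subseq hu
  exact (mem_gDown_iff hDε).2 ⟨u₀, hu₀, StairReach.of_tendsto hD (hlim.comp hφ.tendsto_atTop)
    (hφlim.prodMk_nhds tendsto_const_nhds) fun k => hpu (φ k)⟩

end gDown

section Cell

variable {m n : ℕ} {Dε : Set (ℝ × ℝ)} {i j : ℕ}

lemma cellT_union_cellR_subset_cellD : cellT i j ∪ cellR i j ⊆ cellD i j := by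
  rintro z (⟨h₁, h₂⟩ | ⟨h₁, h₂⟩)
  · exact ⟨h₁, by rw [mem_singleton_iff.1 h₂]; exact ⟨by linarith, le_rfl⟩⟩
  · exact ⟨by rw [mem_singleton_iff.1 h₁]; exact ⟨by linarith, le_rfl⟩, h₂⟩

lemma cellL_union_cellB_subset_cellD : cellL i j ∪ cellB i j ⊆ cellD i j := by
  rintro z (⟨h₁, h₂⟩ | ⟨h₁, h₂⟩)
  · exact ⟨by rw [mem_singleton_iff.1 h₁]; exact ⟨le_rfl, by linarith⟩, h₂⟩
  · exact ⟨h₁, by rw [mem_singleton_iff.1 h₂]; exact ⟨le_rfl, by linarith⟩⟩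

lemma isClosed_cellL_union_cellB : IsClosed (cellL i j ∪ cellB i j) :=
  (isClosed_singleton.prod isClosed_Icc).union (isClosed_Icc.prod isClosed_singleton)

lemma prec_of_sub_le {q q' : ℝ × ℝ} (hq : q ∈ cellL i j ∪ cellB i j)
    (hq' : q' ∈ cellL i j ∪ cellB i j) (h : q'.1 - q'.2 ≤ q.1 - q.2) : prec q' q := by
  simp only [cellL, cellB, mem_union, mem_prod, mem_singleton_iff, mem_Icc] at hq hq'
  rcases hq with ⟨hq₁, hq₂⟩ | ⟨hq₁, hq₂⟩ <;> rcases hq' with ⟨hq₁', hq₂'⟩ | ⟨hq₁', hq₂'⟩ <;>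
    exact ⟨by linarith, by linarith⟩

lemma StairReach.exists_mem_cellL_union_cellB {p b : ℝ × ℝ} (hpb : StairReach Dε p b)
    (hp : p ∈ cellD i j) (hb : b.2 ≤ j - 1) :
    ∃ c ∈ cellL i j ∪ cellB i j, StairReach Dε p c ∧ StairReach Dε c b := by
  obtain ⟨c, hpc, hcb, h₁, h₂, hc⟩ := hpb.exists_entry hp.1.1 hp.2.1 hb
  refine ⟨c, ?_, hpc, hcb⟩
  rcases hc with hc | hc
  · exact Or.inl ⟨hc, h₂, hpc.le.2.trans hp.2.2⟩
  · exact Or.inr ⟨⟨h₁, hpc.le.1.trans hp.1.2⟩, hc⟩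

def cellEntrySet (m : ℕ) (Dε : Set (ℝ × ℝ)) (i j : ℕ) (p : ℝ × ℝ) : Set (ℝ × ℝ) :=
  {q | q ∈ gDown m Dε ∩ (cellL i j ∪ cellB i j) ∧ q.1 ≤ p.1 ∧ q.2 ≤ p.2}

lemma StairReach.exists_mem_cellEntrySet (hDε : Dε ⊆ Dfull m n) (hj : 1 ≤ j) {p : ℝ × ℝ}
    {u : ℝ} (hpu : StairReach Dε p (u, 0)) (hu : u ∈ Icc (0 : ℝ) (2 * m)) (hpc : p ∈ cellD i j) :
    ∃ c ∈ cellEntrySet m Dε i j p, StairReach Dε c (u, 0) := by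
  obtain ⟨c, hc, hpc', hcu⟩ :=
    hpu.exists_mem_cellL_union_cellB hpc (by simpa using (Nat.one_le_cast.2 hj : (1 : ℝ) ≤ j))
  exact ⟨c, ⟨⟨(mem_gDown_iff hDε).2 ⟨u, hu, hcu⟩, hc⟩, hpc'.le⟩, hcu⟩

lemma cellEntrySet_nonempty (hDε : Dε ⊆ Dfull m n) (hj : 1 ≤ j) {p : ℝ × ℝ}
    (hp : p ∈ gDown m Dε) (hpc : p ∈ cellD i j) : (cellEntrySet m Dε i j p).Nonempty := by
  obtain ⟨u, hu, hpu⟩ := (mem_gDown_iff hDε).1 hp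
  obtain ⟨c, hc, -⟩ := hpu.exists_mem_cellEntrySet hDε hj hu hpc
  exact ⟨c, hc⟩

lemma exists_greatest_cellEntrySet (hD : IsClosed Dε) (hDε : Dε ⊆ Dfull m n) {p : ℝ × ℝ}
    (hne : (cellEntrySet m Dε i j p).Nonempty) :
    ∃ q ∈ cellEntrySet m Dε i j p, ∀ q' ∈ cellEntrySet m Dε i j p, prec q' q := by
  have hcompact : IsCompact (cellEntrySet m Dε i j p) :=
    (isCompact_Icc.prod isCompact_Icc).of_isClosed_subset
      (((isClosed_gDown hD hDε).inter isClosed_cellL_union_cellB).inter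
        ((isClosed_le continuous_fst continuous_const).inter
          (isClosed_le continuous_snd continuous_const)))
      fun q hq => hDε hq.1.1.1
  obtain ⟨q, hq, hmax⟩ :=
    hcompact.exists_isMaxOn hne (continuous_fst.sub continuous_snd).continuousOn
  exact ⟨q, hq, fun q' hq' => prec_of_sub_le hq.1.2 hq'.1.2 (hmax hq')⟩

lemma rDown_eq_of_greatest (hDε : Dε ⊆ Dfull m n) (hF : Convex ℝ (Dε ∩ cellD i j)) (hj : 1 ≤ j)
    {p q : ℝ × ℝ} (hp : p ∈ gDown m Dε) (hpc : p ∈ cellD i j) (hq : q ∈ cellEntrySet m Dε i j p)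
    (hgreat : ∀ q' ∈ cellEntrySet m Dε i j p, prec q' q) : rDown m Dε p = rDown m Dε q := by
  have hentry : ∀ u ∈ Icc (0 : ℝ) (2 * m), StairReach Dε p (u, 0) →
      ∃ c, prec c q ∧ StairReach Dε c (u, 0) := fun u hu hpu => by
    obtain ⟨c, hc, hcu⟩ := hpu.exists_mem_cellEntrySet hDε hj hu hpc
    exact ⟨c, hgreat c hc, hcu⟩
  have hpq : StairReach Dε p q := hF.stairReach inter_subset_left ⟨hp.1, hpc⟩
    ⟨hq.1.1.1, cellL_union_cellB_subset_cellD hq.1.2⟩ hq.2.1 hq.2.2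
  rcases (hDε hq.1.1.1).2.1.eq_or_lt with hq₂ | hq₂
  · have hqu : (q.1, (0 : ℝ)) = q := Prod.ext rfl hq₂
    have hgreatest : IsGreatest {u | u ∈ Icc (0 : ℝ) (2 * m) ∧ StairReach Dε p (u, 0)} q.1 := by
      refine ⟨⟨(hDε hq.1.1.1).1, hqu ▸ hpq⟩, fun u ⟨hu, hpu⟩ => ?_⟩
      obtain ⟨c, hcq, hcu⟩ := hentry u hu hpu
      exact hcu.le.1.trans hcq.1
    rcases (hDε hp.1).2.1.eq_or_lt with hp₂ | hp₂
    · have hpu : StairReach Dε p (p.1, 0) := by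
        rw [show (p.1, (0 : ℝ)) = p from Prod.ext rfl hp₂]
        exact StairReach.refl hp.1
      rw [rDown, rDown, if_pos hp₂.symm, if_pos hq₂.symm]
      exact le_antisymm (hgreatest.2 ⟨(hDε hp.1).1, hpu⟩) hq.2.1
    · rw [rDown_eq_sSup hp₂, hgreatest.csSup_eq, rDown, if_pos hq₂.symm]
  · rw [rDown_eq_sSup (hq₂.trans_le hq.2.2), rDown_eq_sSup hq₂]
    obtain ⟨u₀, hu₀, hqu₀⟩ := (mem_gDown_iff hDε).1 hq.1.1
    refine csSup_eq_csSup_of_forall_exists_le (fun u ⟨hu, hpu⟩ => ?_)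
      fun u ⟨hu, hqu⟩ => ⟨u, ⟨hu, hpq.trans hqu⟩, le_rfl⟩
    obtain ⟨c, hcq, hcu⟩ := hentry u hu hpu
    rcases le_or_gt u u₀ with hle | hlt
    · exact ⟨u₀, ⟨hu₀, hqu₀⟩, hle⟩
    · exact ⟨u, ⟨hu, hcu.of_crossing hqu₀ hcq.1 hcq.2 rfl hlt.le⟩, le_rfl⟩

end Cell

theorem stmt11_general
    (k m n : ℕ)
    (x y : ℕ → EuclideanSpace ℝ (Fin k)) (hx : x m = x 0)
    (ε : ℝ)
    (Dε : Set (ℝ × ℝ)) (hDε : Dε = Dfree m n x y ε)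
    (i j : ℕ) (hi1 : 1 ≤ i) (hj1 : 1 ≤ j) :
    ∀ p ∈ gDown m Dε ∩ (cellT i j ∪ cellR i j),
      ∃ q : ℝ × ℝ,
        (q ∈ gDown m Dε ∩ (cellL i j ∪ cellB i j) ∧ q.1 ≤ p.1 ∧ q.2 ≤ p.2) ∧
        (∀ q' : ℝ × ℝ,
          q' ∈ gDown m Dε ∩ (cellL i j ∪ cellB i j) → q'.1 ≤ p.1 → q'.2 ≤ p.2 →
            prec q' q) ∧
        rDown m Dε p = rDown m Dε q := by
  rintro p ⟨hp, hpTR⟩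
  subst hDε
  have hDfull : Dfree m n x y ε ⊆ Dfull m n := fun z hz => hz.1
  have hpc : p ∈ cellD i j := cellT_union_cellR_subset_cellD hpTR
  obtain ⟨q, hq, hgreat⟩ := exists_greatest_cellEntrySet (isClosed_Dfree hx n y ε) hDfull
    (cellEntrySet_nonempty hDfull hj1 hp hpc)
  exact ⟨q, hq, fun q' h₁ h₂ h₃ => hgreat q' ⟨h₁, h₂, h₃⟩,
    rDown_eq_of_greatest hDfull (convex_Dfree_inter_cellD hx ε hi1 hj1) hj1 hp hpc hq hgreat⟩

theorem stmt11
    (k m n : ℕ) (hk : 1 ≤ k) (hm : 1 ≤ m) (hn : 1 ≤ n)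
    (x y : ℕ → EuclideanSpace ℝ (Fin k)) (hx : x m = x 0) (hy : y n = y 0)
    (ε : ℝ) (hε : 0 ≤ ε)
    (Dε : Set (ℝ × ℝ)) (hDε : Dε = Dfree m n x y ε)
    (i j : ℕ) (hi1 : 1 ≤ i) (hi2 : i ≤ 2*m) (hj1 : 1 ≤ j) (hj2 : j ≤ n) :
    ∀ p ∈ gDown m Dε ∩ (cellT i j ∪ cellR i j),
      ∃ q : ℝ × ℝ,
        (q ∈ gDown m Dε ∩ (cellL i j ∪ cellB i j) ∧ q.1 ≤ p.1 ∧ q.2 ≤ p.2) ∧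
        (∀ q' : ℝ × ℝ,
          q' ∈ gDown m Dε ∩ (cellL i j ∪ cellB i j) → q'.1 ≤ p.1 → q'.2 ≤ p.2 →
            prec q' q) ∧
        rDown m Dε p = rDown m Dε q :=
  stmt11_general k m n x y hx ε Dε hDε i j hi1 hj1
end
end

section
/- For each i ∈ {1,…,2m} and j ∈ {1,…,n}, the pointer r_↓ is constant on g_↓ ∩ R_ij: for any two points (i,v), (i,v') ∈ g_↓ ∩ R_ij, r_↓(i,v) = r_↓(i,v'). -/
open Set

noncomputable section

/-!
A monotone path is exactly a connected chain for the product order on `ℝ × ℝ`. Two such chains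
meeting at a point `e` can be spliced into one (the part of the first below `e`, the part of the
second above `e`), and two connected chains that swap sides between two levels of `u + v` cross.

Fix the right side `R_ij` of a cell and `v < v'` with `(i, v), (i, v') ∈ g↓`. Since `f_Y` is affine
on `[j - 1, j]` and balls are convex, the vertical segment from `(i, v)` to `(i, v')` is free. If
`v = 0`, every bottom point reachable from `(i, v')` lies left of `i`, and `i` itself is reached
along the segment, so both pointers equal `i`. If `v > 0`, a path from the bottom to `(i, v)` extends
along the segment to `(i, v')`, so `r↓(i, v) ≤ r↓(i, v')`. Conversely, take a path `γ` from `(w, 0)`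
to `(i, v')` with `w` beyond a point `(q, 0)` reachable from `(i, v)` by a path `δ`: between the
levels `w` and `i + v`, `γ` starts right of `δ` and ends left of it, so they cross, and splicing at
the crossing reaches `(w, 0)` from `(i, v)`.
-/

section Chains

lemma mul_sub_nonneg_iff {p q : ℝ × ℝ} :
    0 ≤ (p.1 - q.1) * (p.2 - q.2) ↔ q ≤ p ∨ p ≤ q := by
  simp only [mul_nonneg_iff, sub_nonneg, sub_nonpos, Prod.le_def]

lemma isMonPath_iff {Dε γ : Set (ℝ × ℝ)} :
    IsMonPath Dε γ ↔ γ ⊆ Dε ∧ IsConnected γ ∧ IsChain (· ≤ ·) γ := by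
  refine and_congr_right' (and_congr_right' ⟨fun h p hp q hq _ => ?_, fun h p hp q hq => ?_⟩)
  · exact (mul_sub_nonneg_iff.1 (h p hp q hq)).symm
  · exact mul_sub_nonneg_iff.2 (h.total hp hq).symm

variable {γ δ : Set (ℝ × ℝ)}

lemma IsChain.le_of_add_le (hγ : IsChain (· ≤ ·) γ) {p q : ℝ × ℝ} (hp : p ∈ γ) (hq : q ∈ γ)
    (h : p.1 + p.2 ≤ q.1 + q.2) : p ≤ q := by
  rcases hγ.total hp hq with hpq | hqp
  · exact hpq
  · rw [Prod.le_def] at hqp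
    exact Prod.le_def.2 ⟨by linarith, by linarith⟩

lemma IsChain.eq_of_add_eq (hγ : IsChain (· ≤ ·) γ) {p q : ℝ × ℝ} (hp : p ∈ γ) (hq : q ∈ γ)
    (h : p.1 + p.2 = q.1 + q.2) : p = q :=
  le_antisymm (hγ.le_of_add_le hp hq h.le) (hγ.le_of_add_le hq hp h.ge)

lemma IsChain.isConnected_inter_Iic (hγc : IsConnected γ) (hγ : IsChain (· ≤ ·) γ)
    {p : ℝ × ℝ} (hp : p ∈ γ) : IsConnected (γ ∩ Iic p) := by
  have himage : (· ⊓ p) '' γ = γ ∩ Iic p := by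
    ext q
    constructor
    · rintro ⟨r, hr, rfl⟩
      dsimp only
      rcases hγ.total hr hp with h | h
      · rw [inf_eq_left.2 h]; exact ⟨hr, h⟩
      · rw [inf_eq_right.2 h]; exact ⟨hp, self_mem_Iic⟩
    · rintro ⟨hq, hqp⟩
      exact ⟨q, hq, inf_eq_left.2 hqp⟩
  rw [← himage]
  exact hγc.image _ (((continuous_fst.inf continuous_const).prodMk
    (continuous_snd.inf continuous_const)).continuousOn)

lemma IsChain.isConnected_inter_Ici (hγc : IsConnected γ) (hγ : IsChain (· ≤ ·) γ)
    {p : ℝ × ℝ} (hp : p ∈ γ) : IsConnected (γ ∩ Ici p) := by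
  have himage : (· ⊔ p) '' γ = γ ∩ Ici p := by
    ext q
    constructor
    · rintro ⟨r, hr, rfl⟩
      dsimp only
      rcases hγ.total hr hp with h | h
      · rw [sup_eq_right.2 h]; exact ⟨hp, self_mem_Ici⟩
      · rw [sup_eq_left.2 h]; exact ⟨hr, h⟩
    · rintro ⟨hq, hpq⟩
      exact ⟨q, hq, sup_eq_left.2 hpq⟩
  rw [← himage]
  exact hγc.image _ (((continuous_fst.sup continuous_const).prodMk
    (continuous_snd.sup continuous_const)).continuousOn)

lemma IsConnected.exists_mem_add_eq (hγc : IsConnected γ) {p q : ℝ × ℝ} (hp : p ∈ γ)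
    (hq : q ∈ γ) {w : ℝ} (hw : w ∈ Icc (p.1 + p.2) (q.1 + q.2)) :
    ∃ r ∈ γ, r.1 + r.2 = w :=
  hγc.isPreconnected.intermediate_value hp hq (by fun_prop) hw

/-- The first coordinate of the point of `γ` on the antidiagonal `u + v = w` (unique when `γ` is a
chain). -/
def fstAtLevel (γ : Set (ℝ × ℝ)) (w : ℝ) : ℝ :=
  sSup {a : ℝ | (a, w - a) ∈ γ}

lemma IsChain.fstAtLevel_add (hγ : IsChain (· ≤ ·) γ) {r : ℝ × ℝ} (hr : r ∈ γ) :
    fstAtLevel γ (r.1 + r.2) = r.1 := by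
  have hlevel : {a : ℝ | (a, r.1 + r.2 - a) ∈ γ} = {r.1} := by
    ext a
    refine ⟨fun ha => congrArg Prod.fst (hγ.eq_of_add_eq ha hr (by ring)), ?_⟩
    rintro rfl
    simpa using hr
  rw [fstAtLevel, hlevel, csSup_singleton]

lemma IsChain.lipschitzOnWith_fstAtLevel (hγ : IsChain (· ≤ ·) γ) :
    LipschitzOnWith 1 (fstAtLevel γ) ((fun r : ℝ × ℝ => r.1 + r.2) '' γ) := by
  refine LipschitzOnWith.of_dist_le_mul ?_
  rintro _ ⟨r, hr, rfl⟩ _ ⟨r', hr', rfl⟩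
  rw [hγ.fstAtLevel_add hr, hγ.fstAtLevel_add hr', NNReal.coe_one, one_mul, Real.dist_eq,
    Real.dist_eq]
  rcases hγ.total hr hr' with h | h <;> rw [Prod.le_def] at h
  · exact abs_le_abs_of_nonpos (by linarith) (by linarith)
  · exact abs_le_abs_of_nonneg (by linarith) (by linarith)

/-- `γ` lies weakly right of `δ` on the antidiagonal through `cγ` and weakly left of it on the
antidiagonal through `dγ`, so the two chains meet in between. -/
lemma IsChain.exists_mem_inter_of_crossing (hγc : IsConnected γ) (hγ : IsChain (· ≤ ·) γ)
    (hδc : IsConnected δ) (hδ : IsChain (· ≤ ·) δ) {cγ cδ dγ dδ : ℝ × ℝ}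
    (hcγ : cγ ∈ γ) (hcδ : cδ ∈ δ) (hdγ : dγ ∈ γ) (hdδ : dδ ∈ δ)
    (hc : cγ.1 + cγ.2 = cδ.1 + cδ.2) (hd : dγ.1 + dγ.2 = dδ.1 + dδ.2)
    (hcd : cγ.1 + cγ.2 ≤ dγ.1 + dγ.2) (hc1 : cδ.1 ≤ cγ.1) (hd1 : dγ.1 ≤ dδ.1) :
    ∃ e ∈ γ ∩ δ, cγ.1 + cγ.2 ≤ e.1 + e.2 ∧ e.1 + e.2 ≤ dγ.1 + dγ.2 := by
  have hlevel : Continuous fun r : ℝ × ℝ => r.1 + r.2 := by fun_prop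
  have hIγ : Icc (cγ.1 + cγ.2) (dγ.1 + dγ.2) ⊆ (fun r : ℝ × ℝ => r.1 + r.2) '' γ :=
    (hγc.image _ hlevel.continuousOn).isPreconnected.Icc_subset ⟨cγ, hcγ, rfl⟩ ⟨dγ, hdγ, rfl⟩
  have hIδ : Icc (cγ.1 + cγ.2) (dγ.1 + dγ.2) ⊆ (fun r : ℝ × ℝ => r.1 + r.2) '' δ := by
    rw [hc, hd]
    exact (hδc.image _ hlevel.continuousOn).isPreconnected.Icc_subset ⟨cδ, hcδ, rfl⟩ ⟨dδ, hdδ, rfl⟩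
  have hcont : ContinuousOn (fun w => fstAtLevel γ w - fstAtLevel δ w)
      (Icc (cγ.1 + cγ.2) (dγ.1 + dγ.2)) :=
    (hγ.lipschitzOnWith_fstAtLevel.continuousOn.mono hIγ).sub
      (hδ.lipschitzOnWith_fstAtLevel.continuousOn.mono hIδ)
  have hzero : (0 : ℝ) ∈ Icc (fstAtLevel γ (dγ.1 + dγ.2) - fstAtLevel δ (dγ.1 + dγ.2))
      (fstAtLevel γ (cγ.1 + cγ.2) - fstAtLevel δ (cγ.1 + cγ.2)) := by
    rw [hγ.fstAtLevel_add hcγ, hγ.fstAtLevel_add hdγ, hc, hd, hδ.fstAtLevel_add hcδ,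
      hδ.fstAtLevel_add hdδ]
    constructor <;> linarith
  obtain ⟨w, hw, hmeet⟩ := intermediate_value_Icc' hcd hcont hzero
  obtain ⟨r, hr, rfl⟩ := hIγ hw
  obtain ⟨r', hr', hrr'⟩ := hIδ hw
  dsimp only at hw hmeet hrr'
  rw [hγ.fstAtLevel_add hr, ← hrr', hδ.fstAtLevel_add hr', sub_eq_zero] at hmeet
  obtain rfl : r = r' := Prod.ext hmeet (by linarith)
  exact ⟨r, ⟨hr, hr'⟩, hw⟩

end Chains

section Reachability

variable {Dε : Set (ℝ × ℝ)}

lemma Reach.symm {p q : ℝ × ℝ} (h : Reach Dε p q) : Reach Dε q p :=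
  let ⟨γ, hγ, hp, hq⟩ := h
  ⟨γ, hγ, hq, hp⟩

lemma Reach.fst_le_of_snd_lt {p q : ℝ × ℝ} (h : Reach Dε p q) (hq : q.2 < p.2) : q.1 ≤ p.1 := by
  obtain ⟨γ, hγ, hp, hq'⟩ := h
  rcases (isMonPath_iff.1 hγ).2.2.total hp hq' with hpq | hqp
  · exact absurd (Prod.le_def.1 hpq).2 (not_le.2 hq)
  · exact (Prod.le_def.1 hqp).1

lemma Reach.trans_of_le {p e q : ℝ × ℝ} (hpe : Reach Dε p e) (heq : Reach Dε e q)
    (hpe' : p ≤ e) (heq' : e ≤ q) : Reach Dε p q := by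
  obtain ⟨γ, hγ, hp, he⟩ := hpe
  obtain ⟨δ, hδ, he', hq⟩ := heq
  obtain ⟨hγD, hγc, hγ⟩ := isMonPath_iff.1 hγ
  obtain ⟨hδD, hδc, hδ⟩ := isMonPath_iff.1 hδ
  refine ⟨γ ∩ Iic e ∪ δ ∩ Ici e, isMonPath_iff.2 ⟨?_, ?_, ?_⟩, Or.inl ⟨hp, hpe'⟩,
    Or.inr ⟨hq, heq'⟩⟩
  · exact union_subset (inter_subset_left.trans hγD) (inter_subset_left.trans hδD)
  · exact IsConnected.union ⟨e, ⟨he, self_mem_Iic⟩, ⟨he', self_mem_Ici⟩⟩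
      (hγ.isConnected_inter_Iic hγc he) (hδ.isConnected_inter_Ici hδc he')
  · rintro a (⟨ha, hae⟩ | ⟨ha, hea⟩) b (⟨hb, hbe⟩ | ⟨hb, heb⟩) hab
    · exact hγ ha hb hab
    · exact Or.inl (hae.trans heb)
    · exact Or.inr (hbe.trans hea)
    · exact hδ ha hb hab

lemma reach_of_vertical_subset {u v v' : ℝ} (hvv' : v ≤ v') (h : {u} ×ˢ Icc v v' ⊆ Dε) :
    Reach Dε (u, v) (u, v') := by
  refine ⟨{u} ×ˢ Icc v v', isMonPath_iff.2 ⟨h, isConnected_singleton.prod (isConnected_Icc hvv'),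
    ?_⟩, ⟨rfl, le_rfl, hvv'⟩, ⟨rfl, hvv', le_rfl⟩⟩
  rintro ⟨a, b⟩ ⟨rfl, -⟩ ⟨a', b'⟩ ⟨rfl, -⟩ -
  rcases le_total b b' with h | h
  · exact Or.inl (Prod.mk_le_mk.2 ⟨le_rfl, h⟩)
  · exact Or.inr (Prod.mk_le_mk.2 ⟨le_rfl, h⟩)

lemma Reach.of_above_of_le {u v v' q w : ℝ} (hq : Reach Dε (u, v) (q, 0))
    (hw : Reach Dε (u, v') (w, 0)) (hv : 0 < v) (hvv' : v ≤ v') (hqw : q ≤ w) :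
    Reach Dε (u, v) (w, 0) := by
  have hwu : w ≤ u := hw.fst_le_of_snd_lt (by simp only; linarith)
  obtain ⟨δ, hδ, hpδ, hqδ⟩ := hq
  obtain ⟨γ, hγ, hpγ, hwγ⟩ := hw
  obtain ⟨-, hγc, hγ'⟩ := isMonPath_iff.1 hγ
  obtain ⟨-, hδc, hδ'⟩ := isMonPath_iff.1 hδ
  obtain ⟨cδ, hcδ, hcδw⟩ := hδc.exists_mem_add_eq hqδ hpδ (w := w)
    ⟨by simpa using hqw, by simp only; linarith⟩
  obtain ⟨dγ, hdγ, hdγv⟩ := hγc.exists_mem_add_eq hwγ hpγ (w := u + v)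
    ⟨by simp only; linarith, by simp only; linarith⟩
  have hcδ1 : cδ.1 ≤ w := by
    have := (Prod.le_def.1 (hδ'.le_of_add_le hqδ hcδ (by simp only; linarith))).2
    simp only at this
    linarith
  have hdγ1 : dγ.1 ≤ u :=
    (Prod.le_def.1 (hγ'.le_of_add_le hdγ hpγ (by simp only; linarith))).1
  obtain ⟨e, ⟨heγ, heδ⟩, hwe, hev⟩ := hγ'.exists_mem_inter_of_crossing hγc hδc hδ' hwγ hcδ hdγ
    hpδ (by simp only; linarith) (by simp only; linarith) (by simp only; linarith) hcδ1 hdγ1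
  refine (Reach.trans_of_le ⟨γ, hγ, hwγ, heγ⟩ ⟨δ, hδ, heδ, hpδ⟩ (hγ'.le_of_add_le hwγ heγ hwe)
    (hδ'.le_of_add_le heδ hpδ (by simp only at hev ⊢; linarith))).symm

end Reachability

section Pointer

def bottomReach (m : ℕ) (Dε : Set (ℝ × ℝ)) (p : ℝ × ℝ) : Set ℝ :=
  {u : ℝ | u ∈ Icc (0:ℝ) (2*(m:ℝ)) ∧ Reach Dε p (u, (0:ℝ))}

variable {m : ℕ} {Dε : Set (ℝ × ℝ)}

lemma rDown_of_snd_ne_zero {p : ℝ × ℝ} (h : p.2 ≠ 0) :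
    rDown m Dε p = sSup (bottomReach m Dε p) :=
  if_neg h

lemma bddAbove_bottomReach (p : ℝ × ℝ) : BddAbove (bottomReach m Dε p) :=
  ⟨2 * m, fun _ hu => hu.1.2⟩

lemma rDown_eq_of_reach_zero {u v' : ℝ} (hv' : 0 < v') (hu : u ∈ Icc (0:ℝ) (2*(m:ℝ)))
    (h : Reach Dε (u, 0) (u, v')) : rDown m Dε (u, 0) = rDown m Dε (u, v') := by
  rw [rDown_of_snd_ne_zero (p := (u, v')) hv'.ne', rDown, if_pos rfl]
  have hgreatest : IsGreatest (bottomReach m Dε (u, v')) u :=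
    ⟨⟨hu, h.symm⟩, fun w hw => hw.2.fst_le_of_snd_lt hv'⟩
  exact hgreatest.csSup_eq.symm

lemma rDown_eq_of_reach_pos {u v v' : ℝ} (hv : 0 < v) (hvv' : v ≤ v')
    (h : Reach Dε (u, v) (u, v')) (hg : (u, v) ∈ gDown m Dε) :
    rDown m Dε (u, v) = rDown m Dε (u, v') := by
  obtain ⟨-, ⟨q, _⟩, ⟨hq, rfl⟩, hreach⟩ := hg
  have hqS : q ∈ bottomReach m Dε (u, v) := ⟨hq, hreach⟩
  have hsub : bottomReach m Dε (u, v) ⊆ bottomReach m Dε (u, v') := by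
    rintro w ⟨hw, hwr⟩
    have hwu : w ≤ u := hwr.fst_le_of_snd_lt hv
    exact ⟨hw, (hwr.symm.trans_of_le h (Prod.mk_le_mk.2 ⟨hwu, hv.le⟩)
      (Prod.mk_le_mk.2 ⟨le_rfl, hvv'⟩)).symm⟩
  rw [rDown_of_snd_ne_zero hv.ne', rDown_of_snd_ne_zero (hv.trans_le hvv').ne']
  refine le_antisymm (csSup_le_csSup (bddAbove_bottomReach _) ⟨q, hqS⟩ hsub)
    (csSup_le ⟨q, hsub hqS⟩ fun w ⟨hw, hwr⟩ => ?_)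
  rcases le_total w q with hwq | hqw
  · exact hwq.trans (le_csSup (bddAbove_bottomReach _) hqS)
  · exact le_csSup (bddAbove_bottomReach _) ⟨hw, hreach.of_above_of_le hwr hv hvv' hqw⟩

end Pointer

section FreeSpace

variable {k : ℕ} (y : ℕ → EuclideanSpace ℝ (Fin k)) {j : ℕ}

lemma fCurve_of_mem_Icc (hj : 1 ≤ j) {s : ℝ} (hs : s ∈ Icc ((j : ℝ) - 1) j) :
    fCurve y s = ((j : ℝ) - s) • y (j - 1) + (s - ((j : ℝ) - 1)) • y j := by
  rcases hs.2.eq_or_lt with rfl | hlt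
  · simp [fCurve]
  · have hfloor : ⌊s⌋ = (j : ℤ) - 1 := by
      rw [Int.floor_eq_iff]
      push_cast
      constructor <;> linarith [hs.1]
    have htoNat : ⌊s⌋.toNat = j - 1 := by omega
    have hfract : Int.fract s = s - ((j : ℝ) - 1) := by
      rw [Int.fract, hfloor]
      push_cast
      ring
    rw [fCurve, htoNat, hfract, Nat.sub_add_cancel hj]
    congr 1
    ring_nf

lemma fCurve_mem_segment (hj : 1 ≤ j) {v v' t : ℝ} (hv : (j : ℝ) - 1 ≤ v) (hv' : v' ≤ j)
    (ht : t ∈ Icc v v') : fCurve y t ∈ segment ℝ (fCurve y v) (fCurve y v') := by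
  have hvv' : v ≤ v' := ht.1.trans ht.2
  rw [← segment_eq_Icc hvv'] at ht
  obtain ⟨a, b, ha, hb, hab, rfl⟩ := ht
  refine ⟨a, b, ha, hb, hab, ?_⟩
  obtain rfl : b = 1 - a := by linarith
  have hmem : a • v + (1 - a) • v' ∈ Icc ((j : ℝ) - 1) j := by
    simp only [smul_eq_mul, mem_Icc]
    constructor <;> nlinarith
  rw [fCurve_of_mem_Icc y hj ⟨hv, hvv'.trans hv'⟩, fCurve_of_mem_Icc y hj ⟨hv.trans hvv', hv'⟩,
    fCurve_of_mem_Icc y hj hmem, smul_eq_mul, smul_eq_mul]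
  match_scalars <;> ring

lemma vertical_subset_Dfree {m n : ℕ} {x : ℕ → EuclideanSpace ℝ (Fin k)} {ε u v v' : ℝ}
    (hj : 1 ≤ j) (hp : (u, v) ∈ Dfree m n x y ε) (hp' : (u, v') ∈ Dfree m n x y ε)
    (hv : (j : ℝ) - 1 ≤ v) (hv' : v' ≤ j) : {u} ×ˢ Icc v v' ⊆ Dfree m n x y ε := by
  rintro ⟨a, t⟩ ⟨rfl, ht⟩
  refine ⟨⟨hp.1.1, hp.1.2.1.trans ht.1, ht.2.trans hp'.1.2.2⟩, ?_⟩
  have hball := (convex_closedBall (fCurveExt m x a) ε).segment_subset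
    (Metric.mem_closedBall'.2 hp.2) (Metric.mem_closedBall'.2 hp'.2)
  exact Metric.mem_closedBall'.1 (hball (fCurve_mem_segment y hj hv hv' ht))

end FreeSpace

theorem stmt13_general
    (k m n : ℕ)
    (x y : ℕ → EuclideanSpace ℝ (Fin k))
    (ε : ℝ)
    (Dε : Set (ℝ × ℝ)) (hDε : Dε = Dfree m n x y ε)
    (i j : ℕ) (hj1 : 1 ≤ j) :
    ∀ v v' : ℝ, ((i:ℝ), v) ∈ gDown m Dε ∩ cellR i j →
      ((i:ℝ), v') ∈ gDown m Dε ∩ cellR i j →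
      rDown m Dε ((i:ℝ), v) = rDown m Dε ((i:ℝ), v') := by
  subst hDε
  intro v v' hv hv'
  wlog hvv' : v < v' generalizing v v'
  · rcases (not_lt.1 hvv').eq_or_lt with rfl | hv'v
    exacts [rfl, (this v' v hv' hv hv'v).symm]
  obtain ⟨hg, -, hv1, -⟩ := hv
  obtain ⟨hg', -, -, hv2'⟩ := hv'
  have hreach := reach_of_vertical_subset hvv'.le (vertical_subset_Dfree y hj1 hg.1 hg'.1 hv1 hv2')
  rcases (hg.1.1.2.1 : 0 ≤ v).eq_or_lt with rfl | hv
  · exact rDown_eq_of_reach_zero hvv' hg.1.1.1 hreach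
  · exact rDown_eq_of_reach_pos hv hvv'.le hreach hg

theorem stmt13
    (k m n : ℕ) (hk : 1 ≤ k) (hm : 1 ≤ m) (hn : 1 ≤ n)
    (x y : ℕ → EuclideanSpace ℝ (Fin k)) (hx : x m = x 0) (hy : y n = y 0)
    (ε : ℝ) (hε : 0 ≤ ε)
    (Dε : Set (ℝ × ℝ)) (hDε : Dε = Dfree m n x y ε)
    (i j : ℕ) (hi1 : 1 ≤ i) (hi2 : i ≤ 2*m) (hj1 : 1 ≤ j) (hj2 : j ≤ n) :
    ∀ v v' : ℝ, ((i:ℝ), v) ∈ gDown m Dε ∩ cellR i j →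
      ((i:ℝ), v') ∈ gDown m Dε ∩ cellR i j →
      rDown m Dε ((i:ℝ), v) = rDown m Dε ((i:ℝ), v') :=
  stmt13_general k m n x y ε Dε hDε i j hj1
end
end
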